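/- Let B be a real 2×2 matrix with J := det B > 0, a ∈ ℝ², and F(x) := Bx + a. Let τ̂ : ℝ² → 𝕊 and v̂ : ℝ² → ℝ² be continuously differentiable, let τ be the re-scaled contravariant Piola–Kirchhoff transform of τ̂ (determined by J²·τ(F(x)) = B τ̂(x) Bᵀ) and v the re-scaled covariant Piola transform of v̂ (determined by v(F(x)) = J·B⁻ᵀ v̂(x)). Then for every compact measurable set T̂ ⊂ ℝ², writing T := F(T̂), the pairings are conserved: ∫_T (div τ)(y)·v(y) dy = ∫_{T̂} (div τ̂)(x)·v̂(x) dx and ∫_T τ(y) : ε(v)(y) dy = ∫_{T̂} τ̂(x) : ε(v̂)(x) dx (Lebesgue integrals on ℝ²). -/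

import Mathlib

/-!
Substituting `y = Bx + a` turns `∫_T` into `∫_{T̂}` with the factor `J = det B`, so it suffices to
prove the two identities pointwise, after multiplication by `J`. Writing both transformed fields
through the inverse map `y ↦ B⁻¹(y - a)`, the chain rule gives `div τ (Bx + a) = J⁻² B div τ̂ (x)`
(the factor `B⁻¹` from the chain rule cancels the right factor `Bᵀ` of the Piola transform) and
`ε(v)(Bx + a) = J B⁻ᵀ ε(v̂)(x) B⁻¹`. The matrices then cancel in the pairings,
`(B d)·(B⁻ᵀ w) = d·w` and `(B X Bᵀ) : (B⁻ᵀ E B⁻¹) = X : E`, and the powers of `J` multiply to one.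
-/

open MeasureTheory Matrix

noncomputable section

/-- Row-wise divergence of a matrix field: `(div τ)_k = ∂₁ τ_{k1} + ∂₂ τ_{k2}`. -/
def matDiv (τ : (Fin 2 → ℝ) → Matrix (Fin 2) (Fin 2) ℝ) (y : Fin 2 → ℝ) : Fin 2 → ℝ :=
  fun k => ∑ j : Fin 2, fderiv ℝ (fun z => τ z k j) y (Pi.single j 1)

/-- Jacobian matrix of a vector field `w : ℝ² → ℝ²`. -/
def jac (w : (Fin 2 → ℝ) → Fin 2 → ℝ) (y : Fin 2 → ℝ) : Matrix (Fin 2) (Fin 2) ℝ :=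
  Matrix.of fun k j => fderiv ℝ (fun z => w z k) y (Pi.single j 1)

/-- Symmetric gradient (strain) `ε(w) = (Dw + Dwᵀ)/2` of a vector field. -/
def symGrad (w : (Fin 2 → ℝ) → Fin 2 → ℝ) (y : Fin 2 → ℝ) : Matrix (Fin 2) (Fin 2) ℝ :=
  (1 / 2 : ℝ) • (jac w y + (jac w y)ᵀ)

/-- Frobenius inner product of two 2×2 matrices. -/
def frobM (A C : Matrix (Fin 2) (Fin 2) ℝ) : ℝ :=
  ∑ k : Fin 2, ∑ l : Fin 2, A k l * C k l

theorem ContinuousLinearMap.apply_eq_sum_single {ι F : Type*} [Fintype ι] [DecidableEq ι]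
    [NormedAddCommGroup F] [NormedSpace ℝ F] (φ : (ι → ℝ) →L[ℝ] F) (u : ι → ℝ) :
    φ u = ∑ r, u r • φ (Pi.single r 1) := by
  conv_lhs => rw [← Finset.univ_sum_single u]
  simp only [map_sum, ← map_smul, ← Pi.single_smul', smul_eq_mul, mul_one]

theorem fderiv_comp_mulVec_sub_single {ι : Type*} [Fintype ι] [DecidableEq ι] {g : (ι → ℝ) → ℝ}
    (C : Matrix ι ι ℝ) (c y : ι → ℝ) (hg : DifferentiableAt ℝ g (C *ᵥ (y - c))) (j : ι) :
    fderiv ℝ (fun z => g (C *ᵥ (z - c))) y (Pi.single j 1) =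
      ∑ r, C r j * fderiv ℝ g (C *ᵥ (y - c)) (Pi.single r 1) := by
  have hC : HasFDerivAt (fun z => C *ᵥ (z - c)) (Matrix.mulVecLin C).toContinuousLinearMap y := by
    simpa using (Matrix.mulVecLin C).toContinuousLinearMap.hasFDerivAt.comp y
      ((hasFDerivAt_id y).sub_const c)
  have hgC : HasFDerivAt (fun z => g (C *ᵥ (z - c)))
      ((fderiv ℝ g (C *ᵥ (y - c))).comp (Matrix.mulVecLin C).toContinuousLinearMap) y :=
    hg.hasFDerivAt.comp y hC
  rw [hgC.fderiv]
  simp [ContinuousLinearMap.apply_eq_sum_single _ (C.col j)]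

theorem fderiv_mulVec_apply {E m n : Type*} [NormedAddCommGroup E] [NormedSpace ℝ E] [Fintype n]
    {w : E → n → ℝ} {x : E} (hw : ∀ p, DifferentiableAt ℝ (fun u => w u p) x)
    (P : Matrix m n ℝ) (k : m) (h : E) :
    fderiv ℝ (fun u => (P *ᵥ w u) k) x h = (P *ᵥ fun p => fderiv ℝ (fun u => w u p) x h) k := by
  have hsum := HasFDerivAt.fun_sum (u := Finset.univ) fun p _ => ((hw p).hasFDerivAt.const_mul (P k p))
  simp only [Matrix.mulVec, dotProduct]
  rw [hsum.fderiv]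
  simp

theorem fderiv_mul_mul_apply {E l m n o : Type*} [NormedAddCommGroup E] [NormedSpace ℝ E]
    [Fintype m] [Fintype n]
    {σ : E → Matrix m n ℝ} {x : E} (hσ : ∀ p q, DifferentiableAt ℝ (fun u => σ u p q) x)
    (P : Matrix l m ℝ) (Q : Matrix n o ℝ) (k : l) (j : o) (h : E) :
    fderiv ℝ (fun u => (P * σ u * Q) k j) x h =
      (P * Matrix.of (fun p q => fderiv ℝ (fun u => σ u p q) x h) * Q) k j := by
  have hsum := HasFDerivAt.fun_sum (u := Finset.univ) fun q _ => (HasFDerivAt.fun_sum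
    (u := Finset.univ) fun p _ => ((hσ p q).hasFDerivAt.const_mul (P k p))).mul_const (Q q j)
  simp only [Matrix.mul_apply]
  rw [hsum.fderiv]
  simp [Finset.mul_sum, mul_comm, mul_left_comm]

theorem jac_mulVec_comp_mulVec_sub {w : (Fin 2 → ℝ) → Fin 2 → ℝ} (P C : Matrix (Fin 2) (Fin 2) ℝ)
    (c y : Fin 2 → ℝ) (hw : ∀ p, DifferentiableAt ℝ (fun u => w u p) (C *ᵥ (y - c))) :
    jac (fun z => P *ᵥ w (C *ᵥ (z - c))) y = P * jac w (C *ᵥ (y - c)) * C := by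
  ext k j
  have hg : DifferentiableAt ℝ (fun u => (P *ᵥ w u) k) (C *ᵥ (y - c)) := by
    simp only [Matrix.mulVec, dotProduct]; fun_prop
  simp only [jac, Matrix.of_apply, fderiv_comp_mulVec_sub_single C c y hg,
    fderiv_mulVec_apply hw, Matrix.mul_apply]
  simp [Matrix.mulVec, dotProduct, mul_comm]

theorem matDiv_mul_comp_mulVec_sub_mul {σ : (Fin 2 → ℝ) → Matrix (Fin 2) (Fin 2) ℝ}
    (P Q C : Matrix (Fin 2) (Fin 2) ℝ) (c y : Fin 2 → ℝ) (hQC : Q * Cᵀ = 1)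
    (hσ : ∀ p q, DifferentiableAt ℝ (fun u => σ u p q) (C *ᵥ (y - c))) :
    matDiv (fun z => P * σ (C *ᵥ (z - c)) * Q) y = P *ᵥ matDiv σ (C *ᵥ (y - c)) := by
  ext k
  let D : Fin 2 → Matrix (Fin 2) (Fin 2) ℝ :=
    fun r => Matrix.of fun p q => fderiv ℝ (fun u => σ u p q) (C *ᵥ (y - c)) (Pi.single r 1)
  have hg : ∀ j, DifferentiableAt ℝ (fun u => (P * σ u * Q) k j) (C *ᵥ (y - c)) := by
    intro j; simp only [Matrix.mul_apply]; fun_prop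
  calc matDiv (fun z => P * σ (C *ᵥ (z - c)) * Q) y k
      = ∑ r, (P * D r * Q * Cᵀ) k r := by
        simp only [matDiv, fderiv_comp_mulVec_sub_single C c y (hg _), fderiv_mul_mul_apply hσ]
        rw [Finset.sum_comm]
        refine Finset.sum_congr rfl fun r _ => ?_
        simp only [Matrix.mul_apply (M := P * D r * Q), Matrix.transpose_apply, mul_comm]
        rfl
    _ = ∑ r, (P * D r) k r := by simp only [Matrix.mul_assoc, hQC, Matrix.mul_one]
    _ = (P *ᵥ matDiv σ (C *ᵥ (y - c))) k := by
        simp only [Matrix.mul_apply, Matrix.mulVec, dotProduct, matDiv, D, Matrix.of_apply,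
          Finset.mul_sum]
        exact Finset.sum_comm

theorem integral_image_mulVec_add {ι F : Type*} [Fintype ι] [DecidableEq ι]
    [NormedAddCommGroup F] [NormedSpace ℝ F] {B : Matrix ι ι ℝ} (hB : B.det ≠ 0) (a : ι → ℝ)
    {s : Set (ι → ℝ)} (hs : MeasurableSet s) (g : (ι → ℝ) → F) :
    ∫ y in (fun z => B *ᵥ z + a) '' s, g y = ∫ x in s, |B.det| • g (B *ᵥ x + a) := by
  have hF : ∀ x, HasFDerivAt (fun z => B *ᵥ z + a) (Matrix.mulVecLin B).toContinuousLinearMap x :=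
    fun x => (Matrix.mulVecLin B).toContinuousLinearMap.hasFDerivAt.add_const a
  have hdet : (Matrix.mulVecLin B).toContinuousLinearMap.det = B.det := by
    rw [ContinuousLinearMap.det, LinearMap.coe_toContinuousLinearMap, ← Matrix.toLin'_apply',
      LinearMap.det_toLin']
  have hinj : Function.Injective fun z => B *ᵥ z + a :=
    fun z w h => Matrix.mulVec_injective_of_det_ne_zero hB (add_right_cancel h)
  rw [integral_image_eq_integral_abs_det_fderiv_smul volume hs
    (fun x _ => (hF x).hasFDerivWithinAt) hinj.injOn g, hdet]

theorem mulVec_dotProduct_transpose_mulVec {n R : Type*} [Fintype n] [DecidableEq n]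
    [CommSemiring R] {B L : Matrix n n R} (hLB : L * B = 1) (d w : n → R) :
    (B *ᵥ d) ⬝ᵥ (Lᵀ *ᵥ w) = d ⬝ᵥ w := by
  rw [Matrix.dotProduct_mulVec, Matrix.vecMul_transpose, Matrix.mulVec_mulVec, hLB,
    Matrix.one_mulVec]

theorem frobM_eq_trace (A C : Matrix (Fin 2) (Fin 2) ℝ) : frobM A C = (Aᵀ * C).trace := by
  simp only [frobM, Matrix.trace, Matrix.diag_apply, Matrix.mul_apply, Matrix.transpose_apply]
  exact Finset.sum_comm

theorem frobM_smul_smul (s t : ℝ) (A C : Matrix (Fin 2) (Fin 2) ℝ) :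
    frobM (s • A) (t • C) = s * t * frobM A C := by
  simp only [frobM_eq_trace, Matrix.transpose_smul, Matrix.smul_mul, Matrix.mul_smul,
    Matrix.trace_smul, smul_smul, smul_eq_mul, mul_comm t s]

theorem frobM_mul_transpose_mul {B L : Matrix (Fin 2) (Fin 2) ℝ} (hLB : L * B = 1)
    (X E : Matrix (Fin 2) (Fin 2) ℝ) : frobM (B * X * Bᵀ) (Lᵀ * E * L) = frobM X E := by
  have hBL : Bᵀ * Lᵀ = 1 := by rw [← Matrix.transpose_mul, hLB, Matrix.transpose_one]
  rw [frobM_eq_trace, frobM_eq_trace, Matrix.transpose_mul, Matrix.transpose_mul,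
    Matrix.transpose_transpose]
  calc (B * (Xᵀ * Bᵀ) * (Lᵀ * E * L)).trace = (B * (Xᵀ * (Bᵀ * Lᵀ) * E * L)).trace := by
        simp only [Matrix.mul_assoc]
    _ = (Xᵀ * E * L * B).trace := by
        rw [hBL, Matrix.mul_one, Matrix.trace_mul_comm, Matrix.mul_assoc]
    _ = (Xᵀ * E).trace := by rw [Matrix.mul_assoc, hLB, Matrix.mul_one]

def contravariantPiola (B : Matrix (Fin 2) (Fin 2) ℝ) (a : Fin 2 → ℝ)
    (τhat : (Fin 2 → ℝ) → Matrix (Fin 2) (Fin 2) ℝ) (y : Fin 2 → ℝ) : Matrix (Fin 2) (Fin 2) ℝ :=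
  (B.det ^ 2)⁻¹ • (B * τhat (B⁻¹ *ᵥ (y - a)) * Bᵀ)

def covariantPiola (B : Matrix (Fin 2) (Fin 2) ℝ) (a : Fin 2 → ℝ)
    (vhat : (Fin 2 → ℝ) → Fin 2 → ℝ) (y : Fin 2 → ℝ) : Fin 2 → ℝ :=
  B.det • ((B⁻¹)ᵀ *ᵥ vhat (B⁻¹ *ᵥ (y - a)))

section Piola

variable {B : Matrix (Fin 2) (Fin 2) ℝ} (a : Fin 2 → ℝ)

theorem inv_mulVec_add_sub (hB : IsUnit B.det) (x : Fin 2 → ℝ) :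
    B⁻¹ *ᵥ (B *ᵥ x + a - a) = x := by
  rw [add_sub_cancel_right, Matrix.mulVec_mulVec, Matrix.nonsing_inv_mul _ hB, Matrix.one_mulVec]

theorem eq_contravariantPiola (hB : IsUnit B.det)
    {τhat τ : (Fin 2 → ℝ) → Matrix (Fin 2) (Fin 2) ℝ}
    (hτ : ∀ x, B.det ^ 2 • τ (B *ᵥ x + a) = B * τhat x * Bᵀ) :
    τ = contravariantPiola B a τhat := by
  funext y
  have hy := hτ (B⁻¹ *ᵥ (y - a))
  rw [Matrix.mulVec_mulVec, Matrix.mul_nonsing_inv _ hB, Matrix.one_mulVec, sub_add_cancel] at hy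
  rw [contravariantPiola, ← hy, smul_smul, inv_mul_cancel₀ (pow_ne_zero 2 hB.ne_zero), one_smul]

theorem eq_covariantPiola (hB : IsUnit B.det) {vhat v : (Fin 2 → ℝ) → Fin 2 → ℝ}
    (hv : ∀ x, v (B *ᵥ x + a) = B.det • ((B⁻¹)ᵀ *ᵥ vhat x)) : v = covariantPiola B a vhat := by
  funext y
  have hy := hv (B⁻¹ *ᵥ (y - a))
  rwa [Matrix.mulVec_mulVec, Matrix.mul_nonsing_inv _ hB, Matrix.one_mulVec, sub_add_cancel] at hy

theorem matDiv_contravariantPiola (hB : IsUnit B.det)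
    {τhat : (Fin 2 → ℝ) → Matrix (Fin 2) (Fin 2) ℝ} {x : Fin 2 → ℝ}
    (hτ : ∀ p q, DifferentiableAt ℝ (fun u => τhat u p q) x) :
    matDiv (contravariantPiola B a τhat) (B *ᵥ x + a) = (B.det ^ 2)⁻¹ • (B *ᵥ matDiv τhat x) := by
  have hBB' : Bᵀ * (B⁻¹)ᵀ = 1 := by
    rw [← Matrix.transpose_mul, Matrix.nonsing_inv_mul _ hB, Matrix.transpose_one]
  have h := matDiv_mul_comp_mulVec_sub_mul ((B.det ^ 2)⁻¹ • B) Bᵀ B⁻¹ a (B *ᵥ x + a) hBB'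
    (by rwa [inv_mulVec_add_sub a hB])
  rw [inv_mulVec_add_sub a hB, Matrix.smul_mulVec] at h
  rw [← h]
  congr 1
  funext z
  simp [contravariantPiola]

theorem jac_covariantPiola (hB : IsUnit B.det) {vhat : (Fin 2 → ℝ) → Fin 2 → ℝ} {x : Fin 2 → ℝ}
    (hv : DifferentiableAt ℝ vhat x) :
    jac (covariantPiola B a vhat) (B *ᵥ x + a) = B.det • ((B⁻¹)ᵀ * jac vhat x * B⁻¹) := by
  have h := jac_mulVec_comp_mulVec_sub (B.det • (B⁻¹)ᵀ) B⁻¹ a (B *ᵥ x + a)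
    (by rw [inv_mulVec_add_sub a hB]; exact differentiableAt_pi.1 hv)
  rw [inv_mulVec_add_sub a hB, Matrix.smul_mul, Matrix.smul_mul] at h
  simp only [Matrix.smul_mulVec] at h
  exact h

theorem det_mul_matDiv_dotProduct_piola (hB : IsUnit B.det)
    {τhat : (Fin 2 → ℝ) → Matrix (Fin 2) (Fin 2) ℝ}
    (vhat : (Fin 2 → ℝ) → Fin 2 → ℝ) {x : Fin 2 → ℝ}
    (hτ : ∀ p q, DifferentiableAt ℝ (fun u => τhat u p q) x) :
    B.det * (matDiv (contravariantPiola B a τhat) (B *ᵥ x + a) ⬝ᵥ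
      covariantPiola B a vhat (B *ᵥ x + a)) = matDiv τhat x ⬝ᵥ vhat x := by
  rw [matDiv_contravariantPiola a hB hτ, covariantPiola, inv_mulVec_add_sub a hB,
    smul_dotProduct, dotProduct_smul,
    mulVec_dotProduct_transpose_mulVec (Matrix.nonsing_inv_mul _ hB),
    smul_eq_mul, smul_eq_mul]
  field_simp [hB.ne_zero]

theorem symGrad_covariantPiola (hB : IsUnit B.det) {vhat : (Fin 2 → ℝ) → Fin 2 → ℝ}
    {x : Fin 2 → ℝ} (hv : DifferentiableAt ℝ vhat x) :
    symGrad (covariantPiola B a vhat) (B *ᵥ x + a) =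
      B.det • ((B⁻¹)ᵀ * symGrad vhat x * B⁻¹) := by
  rw [symGrad, symGrad, jac_covariantPiola a hB hv]
  simp only [Matrix.transpose_smul, Matrix.transpose_mul, Matrix.transpose_transpose,
    Matrix.mul_add, Matrix.add_mul, smul_add, Matrix.mul_smul, Matrix.smul_mul, Matrix.mul_assoc,
    smul_comm B.det]

theorem det_mul_frobM_piola_symGrad (hB : IsUnit B.det)
    (τhat : (Fin 2 → ℝ) → Matrix (Fin 2) (Fin 2) ℝ)
    {vhat : (Fin 2 → ℝ) → Fin 2 → ℝ} {x : Fin 2 → ℝ} (hv : DifferentiableAt ℝ vhat x) :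
    B.det * frobM (contravariantPiola B a τhat (B *ᵥ x + a))
      (symGrad (covariantPiola B a vhat) (B *ᵥ x + a)) = frobM (τhat x) (symGrad vhat x) := by
  rw [contravariantPiola, inv_mulVec_add_sub a hB, symGrad_covariantPiola a hB hv,
    frobM_smul_smul, frobM_mul_transpose_mul (Matrix.nonsing_inv_mul _ hB)]
  field_simp [hB.ne_zero]

end Piola

theorem piola_pairing_conservation_general
    (B : Matrix (Fin 2) (Fin 2) ℝ) (hJ : 0 < B.det) (a : Fin 2 → ℝ)
    (τhat τ : (Fin 2 → ℝ) → Matrix (Fin 2) (Fin 2) ℝ)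
    (vhat v : (Fin 2 → ℝ) → Fin 2 → ℝ)
    (hτreg : ∀ k l : Fin 2, ContDiff ℝ 1 fun y => τhat y k l)
    (hvreg : ContDiff ℝ 1 vhat)
    (hτ : ∀ y, (B.det ^ 2) • τ (B.mulVec y + a) = B * τhat y * Bᵀ)
    (hv : ∀ y, v (B.mulVec y + a) = B.det • (B⁻¹)ᵀ.mulVec (vhat y))
    (That : Set (Fin 2 → ℝ)) (hmeas : MeasurableSet That) :
    ((∫ y in (fun z => B.mulVec z + a) '' That, matDiv τ y ⬝ᵥ v y) =
      ∫ z in That, matDiv τhat z ⬝ᵥ vhat z) ∧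
    ((∫ y in (fun z => B.mulVec z + a) '' That, frobM (τ y) (symGrad v y)) =
      ∫ z in That, frobM (τhat z) (symGrad vhat z)) := by
  have hB : IsUnit B.det := hJ.ne'.isUnit
  obtain rfl := eq_contravariantPiola a hB hτ
  obtain rfl := eq_covariantPiola a hB hv
  have hτd : ∀ x p q, DifferentiableAt ℝ (fun u => τhat u p q) x :=
    fun x p q => (hτreg p q).differentiable one_ne_zero x
  have hvd : Differentiable ℝ vhat := hvreg.differentiable one_ne_zero
  simp only [integral_image_mulVec_add hJ.ne' a hmeas, abs_of_pos hJ, smul_eq_mul,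
    det_mul_matDiv_dotProduct_piola a hB vhat (hτd _),
    det_mul_frobM_piola_symGrad a hB τhat (hvd _), and_self]

/-- Conservation of the duality pairings under the re-scaled contravariant
Piola–Kirchhoff transform of stresses and the re-scaled covariant Piola transform of
displacements: `∫_T (div τ)·v = ∫_{T̂} (div τ̂)·v̂` and `∫_T τ : ε(v) = ∫_{T̂} τ̂ : ε(v̂)`. -/
theorem piola_pairing_conservation
    (B : Matrix (Fin 2) (Fin 2) ℝ) (hJ : 0 < B.det) (a : Fin 2 → ℝ)
    (τhat τ : (Fin 2 → ℝ) → Matrix (Fin 2) (Fin 2) ℝ)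
    (vhat v : (Fin 2 → ℝ) → Fin 2 → ℝ)
    (hsym : ∀ y, (τhat y)ᵀ = τhat y)
    (hτreg : ∀ k l : Fin 2, ContDiff ℝ 1 fun y => τhat y k l)
    (hvreg : ContDiff ℝ 1 vhat)
    (hτ : ∀ y, (B.det ^ 2) • τ (B.mulVec y + a) = B * τhat y * Bᵀ)
    (hv : ∀ y, v (B.mulVec y + a) = B.det • (B⁻¹)ᵀ.mulVec (vhat y))
    (That : Set (Fin 2 → ℝ)) (hcomp : IsCompact That) (hmeas : MeasurableSet That) :
    ((∫ y in (fun z => B.mulVec z + a) '' That, matDiv τ y ⬝ᵥ v y) =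
      ∫ z in That, matDiv τhat z ⬝ᵥ vhat z) ∧
    ((∫ y in (fun z => B.mulVec z + a) '' That, frobM (τ y) (symGrad v y)) =
      ∫ z in That, frobM (τhat z) (symGrad vhat z)) :=
  piola_pairing_conservation_general B hJ a τhat τ vhat v hτreg hvreg hτ hv That hmeas
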